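/- Theorem 2.3(b): Under assumptions (H1) and (H2), for every x ∈ S that is not a KKT point (x ∈ S \ Φ) it holds that ∇θ(x)F(x) < 0. -/

import Mathlib

open Matrix Set Filter

noncomputable section

/-- The gradient of `f : ℝⁿ → ℝ` at `x`, as the vector of partial derivatives. -/
def grad {n : ℕ} (f : (Fin n → ℝ) → ℝ) (x : Fin n → ℝ) : Fin n → ℝ :=
  fun j => fderiv ℝ f x (Pi.single j 1)

/-- The feasible set `S`. -/
def feas {n m k : ℕ} (h : Fin m → (Fin n → ℝ) → ℝ) (g : Fin k → (Fin n → ℝ) → ℝ) :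
    Set (Fin n → ℝ) :=
  {x | (∀ i, h i x = 0) ∧ (∀ j, g j x ≤ 0)}

/-- Jacobian of the equality constraints (rows `∇h_i(x)`). -/
def matA {n m : ℕ} (h : Fin m → (Fin n → ℝ) → ℝ) (x : Fin n → ℝ) :
    Matrix (Fin m) (Fin n) ℝ :=
  Matrix.of fun i => grad (h i) x

/-- Jacobian of the inequality constraints (rows `∇g_j(x)`). -/
def matB {n k : ℕ} (g : Fin k → (Fin n → ℝ) → ℝ) (x : Fin n → ℝ) :
    Matrix (Fin k) (Fin n) ℝ :=
  Matrix.of fun j => grad (g j) x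

/-- `H(x) = I − Aᵀ(AAᵀ)⁻¹A`. -/
def matH {n m : ℕ} (h : Fin m → (Fin n → ℝ) → ℝ) (x : Fin n → ℝ) :
    Matrix (Fin n) (Fin n) ℝ :=
  1 - (matA h x)ᵀ * (matA h x * (matA h x)ᵀ)⁻¹ * matA h x

/-- `Q(x) = B(x)H(x)B(x)ᵀ − diag(g(x))`. -/
def matQ {n m k : ℕ} (h : Fin m → (Fin n → ℝ) → ℝ) (g : Fin k → (Fin n → ℝ) → ℝ)
    (x : Fin n → ℝ) : Matrix (Fin k) (Fin k) ℝ :=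
  matB g x * matH h x * (matB g x)ᵀ - Matrix.diagonal (fun j => g j x)

/-- Assumption (H1). -/
def hypH1 {n m k : ℕ} (θ : (Fin n → ℝ) → ℝ) (h : Fin m → (Fin n → ℝ) → ℝ)
    (g : Fin k → (Fin n → ℝ) → ℝ) : Prop :=
  (feas h g).Nonempty ∧ ∀ x₀ ∈ feas h g, IsCompact {x ∈ feas h g | θ x ≤ θ x₀}

/-- Assumption (H2). -/
def hypH2 {n m k : ℕ} (h : Fin m → (Fin n → ℝ) → ℝ) (g : Fin k → (Fin n → ℝ) → ℝ) : Prop :=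
  ∀ x ∈ feas h g,
    LinearIndependent ℝ
      (Sum.elim (fun i : Fin m => grad (h i) x)
        (fun j : {j : Fin k // g j x = 0} => grad (g (j : Fin k)) x))

/-- `P(x) = Q(x)⁻¹ B(x) H(x)`. -/
def matP {n m k : ℕ} (h : Fin m → (Fin n → ℝ) → ℝ) (g : Fin k → (Fin n → ℝ) → ℝ)
    (x : Fin n → ℝ) : Matrix (Fin k) (Fin n) ℝ :=
  (matQ h g x)⁻¹ * matB g x * matH h x

/-- `v(x) = P(x)(∇θ(x))ᵀ`. -/
def vecv {n m k : ℕ} (θ : (Fin n → ℝ) → ℝ) (h : Fin m → (Fin n → ℝ) → ℝ)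
    (g : Fin k → (Fin n → ℝ) → ℝ) (x : Fin n → ℝ) : Fin k → ℝ :=
  (matP h g x).mulVec (grad θ x)

/-- componentwise positive part. -/
def pPart {k : ℕ} (w : Fin k → ℝ) : Fin k → ℝ := fun j => max 0 (w j)

/-- `R₃(x)`. -/
def matR3 {n k : ℕ} (b c : Fin k → (Fin n → ℝ) → ℝ) (p : Fin k → ℕ) (x : Fin n → ℝ)
    (v : Fin k → ℝ) : Matrix (Fin k) (Fin k) ℝ :=
  Matrix.diagonal (fun j => b j x + c j x * (max 0 (v j)) ^ (2 * p j))

/-- The vector field `F(x)` of (2.4), (2.5). -/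
def vecF {n m k : ℕ} (θ : (Fin n → ℝ) → ℝ) (h : Fin m → (Fin n → ℝ) → ℝ)
    (g : Fin k → (Fin n → ℝ) → ℝ)
    (R1 : (Fin n → ℝ) → Matrix (Fin n) (Fin n) ℝ)
    (R2 : (Fin n → ℝ) → Matrix (Fin k) (Fin k) ℝ)
    (a b c : Fin k → (Fin n → ℝ) → ℝ) (p : Fin k → ℕ) (x : Fin n → ℝ) : Fin n → ℝ :=
  -(((matH h x - (matP h g x)ᵀ * matQ h g x * matP h g x) * R1 x *
      (matH h x - (matP h g x)ᵀ * matQ h g x * matP h g x)).mulVec (grad θ x))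
  - ((matP h g x)ᵀ * Matrix.diagonal (fun j => g j x) *
      (R2 x * Matrix.diagonal (fun j => g j x) - Matrix.diagonal (fun j => a j x))).mulVec
        (vecv θ h g x)
  - ((matP h g x)ᵀ * matR3 b c p x (vecv θ h g x)).mulVec (pPart (vecv θ h g x))

/-- The set `Φ` of KKT points. -/
def KKTset {n m k : ℕ} (θ : (Fin n → ℝ) → ℝ) (h : Fin m → (Fin n → ℝ) → ℝ)
    (g : Fin k → (Fin n → ℝ) → ℝ) : Set (Fin n → ℝ) :=
  {x | x ∈ feas h g ∧ ∃ (lam : Fin m → ℝ) (mu : Fin k → ℝ),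
    (∀ j, 0 ≤ mu j) ∧
    grad θ x + (∑ i, lam i • grad (h i) x) + (∑ j, mu j • grad (g j) x) = 0 ∧
    (∑ j, mu j * g j x) = 0}

/-!
Write `u = ∇θ(x)`, `v = P u`, `M = H - PᵀQP` and `G = diag g(x)`. Since `H` and `Q` are
symmetric, `u ⬝ F = -((Mu)ᵀR₁(Mu) + (Gv)ᵀR₂(Gv) - ∑ gⱼaⱼvⱼ² + ∑ (R₃)ⱼⱼ (vⱼ⁺)²)`, and on `S`
every term in the parentheses is nonnegative. If they all vanish, then `Mu = 0`, `v ≤ 0` and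
`gⱼvⱼ = 0`. As `PᵀQP = HBᵀP`, `Mu = 0` says `H(u - Bᵀv) = 0`, so `u - Bᵀv` lies in the row
space of `A`, and `-v` is a multiplier for the inequality constraints: `x` is a KKT point.
Assumption (H2) is what makes `AAᵀ` and `Q` positive definite, hence `H` a projection and `P`
well defined.
-/

section KerProj

variable {ι ν : Type*} [Fintype ι] [Fintype ν] [DecidableEq ι]

theorem isUnit_det_mul_transpose {A : Matrix ι ν ℝ} (hA : LinearIndependent ℝ fun i => A i) :
    IsUnit (A * Aᵀ).det := by
  have hpd := PosDef.mul_conjTranspose_self A (vecMul_injective_iff.mpr hA)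
  rw [conjTranspose_eq_transpose_of_trivial] at hpd
  exact (isUnit_iff_isUnit_det _).mp hpd.isUnit

variable [DecidableEq ν]

def kerProj (A : Matrix ι ν ℝ) : Matrix ν ν ℝ :=
  1 - Aᵀ * (A * Aᵀ)⁻¹ * A

variable (A : Matrix ι ν ℝ)

theorem kerProj_transpose : (kerProj A)ᵀ = kerProj A := by
  simp [kerProj, transpose_nonsing_inv, Matrix.mul_assoc]

theorem kerProj_mul_transpose (hA : IsUnit (A * Aᵀ).det) : kerProj A * Aᵀ = 0 := by
  rw [kerProj, Matrix.sub_mul, Matrix.one_mul, Matrix.mul_assoc, Matrix.mul_assoc,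
    nonsing_inv_mul _ hA, Matrix.mul_one, sub_self]

theorem kerProj_mul_self (hA : IsUnit (A * Aᵀ).det) : kerProj A * kerProj A = kerProj A := by
  nth_rewrite 2 [kerProj]
  rw [Matrix.mul_sub, Matrix.mul_one, ← Matrix.mul_assoc, ← Matrix.mul_assoc,
    kerProj_mul_transpose A hA, Matrix.zero_mul, Matrix.zero_mul, sub_zero]

theorem dotProduct_kerProj_mulVec_self (hA : IsUnit (A * Aᵀ).det) (w : ν → ℝ) :
    w ⬝ᵥ kerProj A *ᵥ w = (kerProj A *ᵥ w) ⬝ᵥ kerProj A *ᵥ w := by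
  conv_lhs => rw [← kerProj_mul_self A hA, ← mulVec_mulVec, dotProduct_mulVec,
    ← mulVec_transpose, kerProj_transpose]

theorem kerProj_mulVec (w : ν → ℝ) : kerProj A *ᵥ w = w - (((A * Aᵀ)⁻¹ * A) *ᵥ w) ᵥ* A := by
  rw [kerProj, sub_mulVec, one_mulVec, Matrix.mul_assoc, ← mulVec_mulVec, mulVec_transpose]

theorem exists_eq_vecMul_of_kerProj_mulVec_eq_zero {w : ν → ℝ} (hw : kerProj A *ᵥ w = 0) :
    ∃ c, w = c ᵥ* A :=
  ⟨_, sub_eq_zero.mp ((kerProj_mulVec A w).symm.trans hw)⟩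

end KerProj

theorem eq_zero_of_vecMul_add_vecMul_eq_zero {ι κ ν : Type*} [Fintype ι] [Fintype κ]
    {A : Matrix ι ν ℝ} {B : Matrix κ ν ℝ} {p : κ → Prop} [DecidablePred p]
    (hli : LinearIndependent ℝ (Sum.elim (fun i => A i) fun j : {j // p j} => B j))
    {c : ι → ℝ} {z : κ → ℝ} (hz : ∀ j, ¬ p j → z j = 0) (h : c ᵥ* A + z ᵥ* B = 0) :
    c = 0 ∧ z = 0 := by
  have hzB : ∑ j : {j // p j}, z j • B j = z ᵥ* B := by
    rw [vecMul_eq_sum, ← Fintype.sum_subtype_add_sum_subtype p,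
      Fintype.sum_eq_zero (fun j : {j // ¬ p j} => z j • B j) fun j => by simp [hz j j.2],
      add_zero]
  have hcoef := Fintype.linearIndependent_iff.mp hli (Sum.elim c fun j => z j) <| by
    rw [Fintype.sum_sum_type]
    simpa only [Sum.elim_inl, Sum.elim_inr, hzB, ← vecMul_eq_sum] using h
  refine ⟨funext fun i => hcoef (.inl i), funext fun j => ?_⟩
  by_cases hj : p j
  · exact hcoef (.inr ⟨j, hj⟩)
  · exact hz j hj

section ReducedGram

variable {ι κ ν : Type*} [Fintype ι] [Fintype ν] [DecidableEq ι] [DecidableEq κ] [DecidableEq ν]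

def reducedGram (A : Matrix ι ν ℝ) (B : Matrix κ ν ℝ) (d : κ → ℝ) : Matrix κ κ ℝ :=
  B * kerProj A * Bᵀ - diagonal d

variable (A : Matrix ι ν ℝ) (B : Matrix κ ν ℝ) (d : κ → ℝ)

theorem reducedGram_transpose : (reducedGram A B d)ᵀ = reducedGram A B d := by
  rw [reducedGram, transpose_sub, transpose_mul, transpose_mul, transpose_transpose,
    kerProj_transpose, diagonal_transpose, Matrix.mul_assoc]

variable [Fintype κ]

theorem dotProduct_reducedGram_mulVec_self (hA : IsUnit (A * Aᵀ).det) (z : κ → ℝ) :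
    z ⬝ᵥ reducedGram A B d *ᵥ z =
      (kerProj A *ᵥ (z ᵥ* B)) ⬝ᵥ kerProj A *ᵥ (z ᵥ* B) + ∑ j, -d j * z j ^ 2 := by
  rw [reducedGram, sub_mulVec, dotProduct_sub, ← mulVec_mulVec, ← mulVec_mulVec,
    dotProduct_mulVec, mulVec_transpose, dotProduct_kerProj_mulVec_self A hA, sub_eq_add_neg]
  simp only [dotProduct, mulVec_diagonal, ← Finset.sum_neg_distrib]
  congr 1
  exact Finset.sum_congr rfl fun j _ => by ring

theorem posDef_reducedGram (hd : ∀ j, d j ≤ 0)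
    (hli : LinearIndependent ℝ (Sum.elim (fun i => A i) fun j : {j // d j = 0} => B j)) :
    (reducedGram A B d).PosDef := by
  have hA : IsUnit (A * Aᵀ).det := isUnit_det_mul_transpose (hli.comp Sum.inl Sum.inl_injective)
  refine PosDef.of_dotProduct_mulVec_pos ?_ fun z hz => ?_
  · rw [IsHermitian, conjTranspose_eq_transpose_of_trivial, reducedGram_transpose]
  rw [star_trivial, dotProduct_reducedGram_mulVec_self A B d hA]
  have hterm : ∀ j ∈ Finset.univ, 0 ≤ -d j * z j ^ 2 := fun j _ =>
    mul_nonneg (neg_nonneg.mpr (hd j)) (sq_nonneg _)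
  have hproj : 0 ≤ (kerProj A *ᵥ (z ᵥ* B)) ⬝ᵥ kerProj A *ᵥ (z ᵥ* B) :=
    Finset.sum_nonneg fun i _ => mul_self_nonneg _
  have hdiag := Finset.sum_nonneg hterm
  by_contra! hle
  obtain ⟨c, hc⟩ := exists_eq_vecMul_of_kerProj_mulVec_eq_zero A
    (dotProduct_self_eq_zero.mp (by linarith))
  have hz_inactive : ∀ j, ¬ d j = 0 → z j = 0 := fun j hj => by
    simpa [hj] using (Finset.sum_eq_zero_iff_of_nonneg hterm).mp (by linarith) j
      (Finset.mem_univ _)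
  refine hz (eq_zero_of_vecMul_add_vecMul_eq_zero hli hz_inactive (c := -c) ?_).2
  rw [neg_vecMul, hc, neg_add_cancel]

end ReducedGram

section DescentField

variable {κ ν : Type*} [Fintype κ] [Fintype ν]

theorem dotProduct_mul_mul_mulVec_self {M : Matrix ν ν ℝ} (hM : Mᵀ = M) (R : Matrix ν ν ℝ)
    (u : ν → ℝ) : u ⬝ᵥ (M * R * M) *ᵥ u = (M *ᵥ u) ⬝ᵥ R *ᵥ (M *ᵥ u) := by
  rw [← mulVec_mulVec, ← mulVec_mulVec, dotProduct_mulVec, ← mulVec_transpose, hM]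

theorem dotProduct_transpose_mul_mulVec (P : Matrix κ ν ℝ) (N : Matrix κ κ ℝ) (u : ν → ℝ)
    (w : κ → ℝ) : u ⬝ᵥ (Pᵀ * N) *ᵥ w = (P *ᵥ u) ⬝ᵥ N *ᵥ w := by
  rw [← mulVec_mulVec, dotProduct_mulVec, vecMul_transpose]

variable [DecidableEq κ]

theorem dotProduct_diagonal_mulVec (d v w : κ → ℝ) :
    v ⬝ᵥ diagonal d *ᵥ w = ∑ j, d j * v j * w j := by
  simp only [dotProduct, mulVec_diagonal]
  exact Finset.sum_congr rfl fun j _ => by ring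

theorem dotProduct_descentField_eq {H : Matrix ν ν ℝ} {Q : Matrix κ κ ℝ} (hH : Hᵀ = H)
    (hQ : Qᵀ = Q) (P : Matrix κ ν ℝ) (R1 : Matrix ν ν ℝ) (R2 : Matrix κ κ ℝ) (gv av d : κ → ℝ)
    (u : ν → ℝ) {v : κ → ℝ} (hv : P *ᵥ u = v) :
    u ⬝ᵥ (-(((H - Pᵀ * Q * P) * R1 * (H - Pᵀ * Q * P)) *ᵥ u)
      - (Pᵀ * diagonal gv * (R2 * diagonal gv - diagonal av)) *ᵥ v
      - (Pᵀ * diagonal d) *ᵥ (fun j => max 0 (v j))) =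
    -(((H - Pᵀ * Q * P) *ᵥ u) ⬝ᵥ R1 *ᵥ ((H - Pᵀ * Q * P) *ᵥ u)
      + (diagonal gv *ᵥ v) ⬝ᵥ R2 *ᵥ (diagonal gv *ᵥ v)
      + ∑ j, -gv j * av j * v j ^ 2 + ∑ j, d j * max 0 (v j) ^ 2) := by
  have hM : (H - Pᵀ * Q * P)ᵀ = H - Pᵀ * Q * P := by
    rw [transpose_sub, transpose_mul, transpose_mul, transpose_transpose, hH, hQ,
      Matrix.mul_assoc]
  have hmid : v ⬝ᵥ (diagonal gv * (R2 * diagonal gv - diagonal av)) *ᵥ v =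
      (diagonal gv *ᵥ v) ⬝ᵥ R2 *ᵥ (diagonal gv *ᵥ v) - ∑ j, gv j * av j * v j ^ 2 := by
    rw [Matrix.mul_sub, diagonal_mul_diagonal, sub_mulVec, dotProduct_sub, ← Matrix.mul_assoc,
      dotProduct_mul_mul_mulVec_self (diagonal_transpose gv), dotProduct_diagonal_mulVec]
    simp only [pow_two, mul_assoc]
  have hpos : v ⬝ᵥ diagonal d *ᵥ (fun j => max 0 (v j)) = ∑ j, d j * max 0 (v j) ^ 2 := by
    rw [dotProduct_diagonal_mulVec]
    refine Finset.sum_congr rfl fun j _ => ?_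
    rcases le_total (v j) 0 with hj | hj
    · simp [max_eq_left hj]
    · rw [max_eq_right hj]; ring
  rw [dotProduct_sub, dotProduct_sub, dotProduct_neg, dotProduct_mul_mul_mulVec_self hM,
    Matrix.mul_assoc Pᵀ (diagonal gv), dotProduct_transpose_mul_mulVec,
    dotProduct_transpose_mul_mulVec, hv, hmid, hpos]
  simp only [neg_mul, Finset.sum_neg_distrib]
  ring

end DescentField

section Multipliers

variable {ι κ ν : Type*} [Fintype ι] [Fintype κ] [Fintype ν]
  [DecidableEq ι] [DecidableEq κ] [DecidableEq ν]

theorem exists_eq_vecMul_add_vecMul (A : Matrix ι ν ℝ) (B : Matrix κ ν ℝ) {Q : Matrix κ κ ℝ}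
    (hQs : Qᵀ = Q) (hQ : IsUnit Q.det) {P : Matrix κ ν ℝ} (hP : Q⁻¹ * B * kerProj A = P)
    {u : ν → ℝ} (hu : (kerProj A - Pᵀ * Q * P) *ᵥ u = 0) :
    ∃ c, u = c ᵥ* A + (P *ᵥ u) ᵥ* B := by
  have hPQP : Pᵀ * Q * P = kerProj A * Bᵀ * P := by
    subst hP
    simp only [transpose_mul, kerProj_transpose, transpose_nonsing_inv, hQs, Matrix.mul_assoc,
      nonsing_inv_mul_cancel_left _ _ hQ]
  obtain ⟨c, hc⟩ := exists_eq_vecMul_of_kerProj_mulVec_eq_zero A (w := u - (P *ᵥ u) ᵥ* B) <| by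
    rwa [mulVec_sub, ← mulVec_transpose, mulVec_mulVec, mulVec_mulVec, ← hPQP, ← sub_mulVec]
  exact ⟨c, sub_eq_iff_eq_add.mp hc⟩

end Multipliers

section Penalties

theorem penalty_nonneg {b c : ℝ} (hb : 0 ≤ b) (hc : 0 ≤ c) (q : ℕ) (t : ℝ) :
    0 ≤ (b + c * max 0 t ^ q) * max 0 t ^ 2 :=
  mul_nonneg (add_nonneg hb (mul_nonneg hc (pow_nonneg (le_max_left _ _) _))) (sq_nonneg _)

variable {κ : Type*} [Fintype κ]

theorem sum_penalty_nonneg {b c v : κ → ℝ} (q : κ → ℕ) (hb : ∀ j, 0 ≤ b j) (hc : ∀ j, 0 ≤ c j) :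
    0 ≤ ∑ j, (b j + c j * max 0 (v j) ^ q j) * max 0 (v j) ^ 2 :=
  Finset.sum_nonneg fun j _ => penalty_nonneg (hb j) (hc j) _ _

theorem nonpos_of_sum_penalty_eq_zero {b c v : κ → ℝ} (q : κ → ℕ) (hb : ∀ j, 0 ≤ b j)
    (hc : ∀ j, 0 ≤ c j) (hbc : ∀ j, 0 < b j + c j)
    (h : ∑ j, (b j + c j * max 0 (v j) ^ q j) * max 0 (v j) ^ 2 = 0) (j : κ) : v j ≤ 0 := by
  have hj := (Finset.sum_eq_zero_iff_of_nonneg fun j _ => penalty_nonneg (hb j) (hc j) _ _).mp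
    h j (Finset.mem_univ _)
  by_contra! hv
  rw [max_eq_right hv.le] at hj
  have hcoef : 0 < b j + c j * v j ^ q j := by
    rcases (hb j).eq_or_lt with hb0 | hbpos
    · have hcj := hbc j
      rw [← hb0, zero_add] at hcj ⊢
      exact mul_pos hcj (pow_pos hv _)
    · exact add_pos_of_pos_of_nonneg hbpos (mul_nonneg (hc j) (pow_nonneg hv.le _))
  exact (mul_pos hcoef (pow_pos hv 2)).ne' hj

variable [DecidableEq κ]

theorem dotProduct_add_sum_nonneg {R : Matrix κ κ ℝ} (hR : R.PosSemidef) {a d : κ → ℝ}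
    (ha : ∀ j, 0 ≤ a j) (hd : ∀ j, d j ≤ 0) (v : κ → ℝ) :
    0 ≤ (diagonal d *ᵥ v) ⬝ᵥ R *ᵥ (diagonal d *ᵥ v) + ∑ j, -d j * a j * v j ^ 2 := by
  have hquad := hR.dotProduct_mulVec_nonneg (diagonal d *ᵥ v)
  rw [star_trivial] at hquad
  exact add_nonneg hquad (Finset.sum_nonneg fun j _ =>
    mul_nonneg (mul_nonneg (neg_nonneg.mpr (hd j)) (ha j)) (sq_nonneg _))

theorem mul_eq_zero_of_dotProduct_add_sum_eq_zero {R : Matrix κ κ ℝ} (hR : R.PosSemidef)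
    {a d v : κ → ℝ} (ha : ∀ j, 0 ≤ a j) (hd : ∀ j, d j ≤ 0)
    (hpd : R.PosDef ∨ (diagonal a).PosDef)
    (h : (diagonal d *ᵥ v) ⬝ᵥ R *ᵥ (diagonal d *ᵥ v) + ∑ j, -d j * a j * v j ^ 2 = 0)
    (j : κ) : d j * v j = 0 := by
  have hquad := hR.dotProduct_mulVec_nonneg (diagonal d *ᵥ v)
  rw [star_trivial] at hquad
  have hterm : ∀ j ∈ Finset.univ, 0 ≤ -d j * a j * v j ^ 2 := fun j _ =>
    mul_nonneg (mul_nonneg (neg_nonneg.mpr (hd j)) (ha j)) (sq_nonneg _)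
  have hsum := Finset.sum_nonneg hterm
  rcases hpd with hRpd | hapd
  · have hdv : diagonal d *ᵥ v = 0 := by
      by_contra hne
      have hpos := hRpd.dotProduct_mulVec_pos hne
      rw [star_trivial] at hpos
      linarith
    simpa [mulVec_diagonal] using congrFun hdv j
  · have hj := (Finset.sum_eq_zero_iff_of_nonneg hterm).mp (by linarith) j (Finset.mem_univ _)
    have ha_pos := posDef_diagonal_iff.mp hapd j
    rcases mul_eq_zero.mp hj with hda | hv
    · rcases mul_eq_zero.mp hda with hd0 | ha0
      · rw [neg_eq_zero.mp hd0, zero_mul]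
      · exact absurd ha0 ha_pos.ne'
    · rw [pow_eq_zero_iff two_ne_zero |>.mp hv, mul_zero]

end Penalties

theorem mem_KKTset_of_multipliers {n m k : ℕ} {θ : (Fin n → ℝ) → ℝ}
    {h : Fin m → (Fin n → ℝ) → ℝ} {g : Fin k → (Fin n → ℝ) → ℝ} {x : Fin n → ℝ}
    (hx : x ∈ feas h g) {lam : Fin m → ℝ} {mu : Fin k → ℝ} (hmu : ∀ j, 0 ≤ mu j)
    (hstat : grad θ x + lam ᵥ* matA h x + mu ᵥ* matB g x = 0)
    (hcompl : ∀ j, mu j * g j x = 0) : x ∈ KKTset θ h g :=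
  ⟨hx, lam, mu, hmu, by rwa [vecMul_eq_sum, vecMul_eq_sum] at hstat,
    Finset.sum_eq_zero fun j _ => hcompl j⟩

theorem stmt_8_general
    {n m k : ℕ}
    (θ : (Fin n → ℝ) → ℝ) (h : Fin m → (Fin n → ℝ) → ℝ) (g : Fin k → (Fin n → ℝ) → ℝ)
    (hH2 : hypH2 h g)
    (R1 : (Fin n → ℝ) → Matrix (Fin n) (Fin n) ℝ)
    (R2 : (Fin n → ℝ) → Matrix (Fin k) (Fin k) ℝ)
    (a b c : Fin k → (Fin n → ℝ) → ℝ) (p : Fin k → ℕ)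
    (hR1pd : ∀ x, (R1 x).PosDef)
    (hR2psd : ∀ x, (R2 x).PosSemidef)
    (ha0 : ∀ j x, 0 ≤ a j x) (hb0 : ∀ j x, 0 ≤ b j x) (hc0 : ∀ j x, 0 ≤ c j x)
    (hbc : ∀ x ∈ feas h g, ∀ j, 0 < b j x + c j x)
    (hpd : ∀ x ∈ feas h g, (R2 x).PosDef ∨ (Matrix.diagonal fun j => a j x).PosDef) :
    ∀ x ∈ feas h g, x ∉ KKTset θ h g →
      grad θ x ⬝ᵥ vecF θ h g R1 R2 a b c p x < 0 := by
  intro x hx hnotKKT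
  have hg : ∀ j, g j x ≤ 0 := hx.2
  have hQ : (matQ h g x).PosDef := posDef_reducedGram _ _ _ hg (hH2 x hx)
  unfold vecF matR3 pPart
  rw [dotProduct_descentField_eq (H := matH h x) (Q := matQ h g x) (kerProj_transpose _)
    (reducedGram_transpose _ _ _) _ _ _ _ _ _ _ (v := vecv θ h g x) rfl, neg_lt_zero]
  set v := vecv θ h g x
  set M := matH h x - (matP h g x)ᵀ * matQ h g x * matP h g x
  have h1 : 0 ≤ (M *ᵥ grad θ x) ⬝ᵥ R1 x *ᵥ (M *ᵥ grad θ x) := by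
    simpa only [star_trivial] using
      (hR1pd x).posSemidef.dotProduct_mulVec_nonneg (M *ᵥ grad θ x)
  have h23 := dotProduct_add_sum_nonneg (hR2psd x) (fun j => ha0 j x) hg v
  have h4 := sum_penalty_nonneg (v := v) (fun j => 2 * p j) (fun j => hb0 j x) fun j => hc0 j x
  by_contra! hle
  have hMu : M *ᵥ grad θ x = 0 := by
    by_contra hne
    have hpos := (hR1pd x).dotProduct_mulVec_pos hne
    rw [star_trivial] at hpos
    linarith
  obtain ⟨lam, hlam⟩ : ∃ lam, grad θ x = lam ᵥ* matA h x + v ᵥ* matB g x :=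
    exists_eq_vecMul_add_vecMul (matA h x) (matB g x) (reducedGram_transpose _ _ _)
      ((isUnit_iff_isUnit_det _).mp hQ.isUnit) (P := matP h g x) rfl hMu
  have hv := nonpos_of_sum_penalty_eq_zero (fun j => 2 * p j) (fun j => hb0 j x)
    (fun j => hc0 j x) (hbc x hx) (by linarith)
  have hgv := mul_eq_zero_of_dotProduct_add_sum_eq_zero (hR2psd x) (fun j => ha0 j x) hg
    (hpd x hx) (by linarith)
  refine hnotKKT (mem_KKTset_of_multipliers hx (lam := -lam) (mu := -v)
    (fun j => neg_nonneg.mpr (hv j)) ?_ fun j => by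
      rw [Pi.neg_apply, neg_mul, mul_comm, hgv j, neg_zero])
  rw [neg_vecMul, neg_vecMul, ← sub_eq_add_neg, ← sub_eq_add_neg, sub_sub, ← hlam, sub_self]

/-- Theorem 2.3(b): `∇θ(x)F(x) < 0` for every `x ∈ S \ Φ`. -/
theorem stmt_8
    {n m k : ℕ} (hmn : m < n)
    (θ : (Fin n → ℝ) → ℝ) (h : Fin m → (Fin n → ℝ) → ℝ) (g : Fin k → (Fin n → ℝ) → ℝ)
    (hθ : ContDiff ℝ 2 θ) (hhC : ∀ i, ContDiff ℝ 2 (h i)) (hgC : ∀ j, ContDiff ℝ 2 (g j))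
    (hH1 : hypH1 θ h g) (hH2 : hypH2 h g)
    (R1 : (Fin n → ℝ) → Matrix (Fin n) (Fin n) ℝ)
    (R2 : (Fin n → ℝ) → Matrix (Fin k) (Fin k) ℝ)
    (a b c : Fin k → (Fin n → ℝ) → ℝ) (p : Fin k → ℕ)
    (hR1C : ∀ i j, ContDiff ℝ 1 fun x => R1 x i j)
    (hR1pd : ∀ x, (R1 x).PosDef)
    (hR2C : ∀ i j, ContDiff ℝ 1 fun x => R2 x i j)
    (hR2psd : ∀ x, (R2 x).PosSemidef)
    (haC : ∀ j, ContDiff ℝ 1 (a j)) (hbC : ∀ j, ContDiff ℝ 1 (b j))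
    (hcC : ∀ j, ContDiff ℝ 1 (c j))
    (ha0 : ∀ j x, 0 ≤ a j x) (hb0 : ∀ j x, 0 ≤ b j x) (hc0 : ∀ j x, 0 ≤ c j x)
    (hbc : ∀ x ∈ feas h g, ∀ j, 0 < b j x + c j x)
    (hpd : ∀ x ∈ feas h g, (R2 x).PosDef ∨ (Matrix.diagonal fun j => a j x).PosDef)
    (hp : ∀ j, 1 ≤ p j) :
    ∀ x ∈ feas h g, x ∉ KKTset θ h g →
      grad θ x ⬝ᵥ vecF θ h g R1 R2 a b c p x < 0 :=
  stmt_8_general θ h g hH2 R1 R2 a b c p hR1pd hR2psd ha0 hb0 hc0 hbc hpd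

end
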